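/- arXiv:2206.12633 — 7 statements merged into one kernel-verified Lean document; each statement's English description precedes it below -/
import Mathlib

section
/- In any proper 3-coloring of the circulant graph C18(3,4), no three consecutive vertices i, i+1, i+2 receive three pairwise distinct colors. -/
def C18 : SimpleGraph (ZMod 18) :=
  SimpleGraph.fromRel (fun i j => i - j = 3 ∨ i - j = 4)

def Proper3 (c : ZMod 18 → Fin 3) : Prop :=
  ∀ i j : ZMod 18, C18.Adj i j → c i ≠ c j

lemma c18_ne (c : ZMod 18 → Fin 3) (hc : Proper3 c) (x y : ZMod 18)
    (h : x - y = 3 ∨ x - y = 4) : c x ≠ c y := by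
  refine hc x y ⟨?_, Or.inl h⟩
  rintro rfl
  simp only [sub_self] at h
  revert h; decide

lemma key (a0 a1 a2 a4 a5 a8 b2 b3 b6 : Fin 3)
    (h1 : a4 ≠ a0) (h2 : a4 ≠ a1) (h3 : a5 ≠ a1) (h4 : a5 ≠ a2)
    (h5 : a8 ≠ a4) (h6 : a8 ≠ a5)
    (h7 : b2 ≠ a1) (h8 : b2 ≠ a2) (h9 : b3 ≠ a0) (h10 : b3 ≠ a1)
    (h11 : b6 ≠ b2) (h12 : b6 ≠ b3) (h13 : b6 ≠ a8)
    (h01 : a0 ≠ a1) (h12' : a1 ≠ a2) (h02 : a0 ≠ a2) : False := by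
  revert h1 h2 h3 h4 h5 h6 h7 h8 h9 h10 h11 h12 h13 h01 h12' h02
  revert a0 a1 a2 a4 a5 a8 b2 b3 b6
  decide

/-- No three consecutive vertices receive three pairwise distinct colors. -/
theorem stmt_2 (c : ZMod 18 → Fin 3) (hc : Proper3 c) (i : ZMod 18) :
    ¬ (c i ≠ c (i + 1) ∧ c (i + 1) ≠ c (i + 2) ∧ c i ≠ c (i + 2)) := by
  rintro ⟨h01, h12, h02⟩
  exact key (c i) (c (i+1)) (c (i+2)) (c (i+4)) (c (i+5)) (c (i+8))
    (c (i-2)) (c (i-3)) (c (i-6))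
    (c18_ne c hc _ _ (by right; ring))
    (c18_ne c hc _ _ (by left; ring))
    (c18_ne c hc _ _ (by right; ring))
    (c18_ne c hc _ _ (by left; ring))
    (c18_ne c hc _ _ (by right; ring))
    (c18_ne c hc _ _ (by left; ring))
    (c18_ne c hc (i+1) (i-2) (by left; ring) |>.symm)
    (c18_ne c hc (i+2) (i-2) (by right; ring) |>.symm)
    (c18_ne c hc i (i-3) (by left; ring) |>.symm)
    (c18_ne c hc (i+1) (i-3) (by right; ring) |>.symm)
    (c18_ne c hc (i-2) (i-6) (by right; ring) |>.symm)
    (c18_ne c hc (i-3) (i-6) (by left; ring) |>.symm)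
    (c18_ne c hc _ _ (by right; ring_nf; decide))
    h01 h12 h02
end

section
/- In any proper 3-coloring of the circulant graph C18(3,4), there is no index i with c(i−1) = c(i+1) ≠ c(i); i.e., the color pattern a,b,a on three consecutive vertices (with a ≠ b) is impossible. -/
lemma adjstep (x y : ZMod 18) (h : x - y = 3 ∨ x - y = 4) : C18.Adj x y := by
  refine ⟨?_, Or.inl h⟩
  intro he
  rw [he, sub_self] at h
  rcases h with h | h <;> exact absurd h (by decide)

lemma thirdEq {p q x y : ℕ} (hp : p < 3) (hq : q < 3) (hx : x < 3) (hy : y < 3)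
    (hpq : p ≠ q) (hxp : x ≠ p) (hxq : x ≠ q) (hyp : y ≠ p) (hyq : y ≠ q) : x = y := by
  omega

lemma pairCases {p q g x y : ℕ} (hp : p < 3) (hq : q < 3) (hg : g < 3) (hx : x < 3)
    (hy : y < 3) (hpq : p ≠ q) (hgp : g ≠ p) (hgq : g ≠ q)
    (hxg : x ≠ g) (hyg : y ≠ g) (hyx : y ≠ x) :
    (x = p ∧ y = q) ∨ (x = q ∧ y = p) := by
  omega

lemma no4 {p q r x : ℕ} (hp : p < 3) (hq : q < 3) (hr : r < 3) (hx : x < 3)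
    (hpq : p ≠ q) (hpr : p ≠ r) (hqr : q ≠ r)
    (h1 : x ≠ p) (h2 : x ≠ q) (h3 : x ≠ r) : False := by
  omega

/-- The pattern a, b, a (with a ≠ b) on consecutive vertices is impossible. -/
theorem stmt_3 (c : ZMod 18 → Fin 3) (hc : Proper3 c) :
    ¬ ∃ i : ZMod 18, c (i - 1) = c (i + 1) ∧ c (i - 1) ≠ c i := by
  rintro ⟨i, h1, h2⟩
  have h18 : (18 : ZMod 18) = 0 := by decide
  have E : ∀ x y : ZMod 18, x - y = 3 ∨ x - y = 4 → (c x).val ≠ (c y).val :=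
    fun x y h => Fin.val_ne_of_ne (hc x y (adjstep x y h))
  have e1 := E (i+3) i (by left; ring)
  have e2 := E (i+3) (i-1) (by right; ring)
  have e3 := E (i+4) i (by right; ring)
  have e4 := E (i+4) (i+1) (by left; ring)
  have e5 := E (i-1) (i-4) (by left; ring)
  have e6 := E i (i-4) (by right; ring)
  have e7 := E (i+1) (i-3) (by right; ring)
  have e8 := E i (i-3) (by left; ring)
  have e9 := E (i+7) (i+3) (by right; ring)
  have e11 := E (i-3) (i-7) (by right; ring)
  have e13 := E (i-7) (i+7) (by right; linear_combination -h18)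
  have e14 := E (i+8) (i+4) (by right; ring)
  have e15 := E (i-7) (i+8) (by left; linear_combination -h18)
  have e16 := E (i-4) (i-8) (by right; ring)
  have e17 := E (i-8) (i+7) (by left; linear_combination -h18)
  have e18 := E (i-6) (i+8) (by right; linear_combination -h18)
  have e19 := E (i-3) (i-6) (by left; ring)
  have e20 := E (i+6) (i+3) (by left; ring)
  have e21 := E (i-8) (i+6) (by right; linear_combination -h18)
  have e22 := E (i+5) (i+1) (by right; ring)
  have e23 := E (i+8) (i+5) (by left; ring)
  have e24 := E (i+9) (i+6) (by left; ring)
  have e25 := E (i+9) (i+5) (by right; ring)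
  have e26 := E (i-6) (i+9) (by left; linear_combination -h18)
  have e27 := E (i-5) (i+9) (by right; linear_combination -h18)
  have e28 := E (i-1) (i-5) (by right; ring)
  have e29 := E (i-5) (i-8) (by left; ring)
  have h1' : (c (i-1)).val = (c (i+1)).val := congrArg Fin.val h1
  have hAB : (c (i-1)).val ≠ (c i).val := Fin.val_ne_of_ne h2
  rw [← h1'] at e4 e7 e22
  -- bounds
  have b0 := (c i).is_lt
  have b2 := (c (i-1)).is_lt
  have b3 := (c (i+3)).is_lt
  have b4 := (c (i+4)).is_lt
  have b5 := (c (i+5)).is_lt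
  have b6 := (c (i+6)).is_lt
  have b7 := (c (i+7)).is_lt
  have b8 := (c (i+8)).is_lt
  have b9 := (c (i+9)).is_lt
  have b10 := (c (i-3)).is_lt
  have b11 := (c (i-4)).is_lt
  have b12 := (c (i-5)).is_lt
  have b13 := (c (i-6)).is_lt
  have b14 := (c (i-7)).is_lt
  have b15 := (c (i-8)).is_lt
  -- c(i+3) is the third color G (≠ A = c(i-1), ≠ B = c(i))
  have q1 : (c (i+4)).val = (c (i+3)).val := thirdEq b2 b0 b4 b3 hAB e4 e3 e2 e1
  have q2 : (c (i-4)).val = (c (i+3)).val :=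
    thirdEq b2 b0 b11 b3 hAB (Ne.symm e5) (Ne.symm e6) e2 e1
  have q3 : (c (i-3)).val = (c (i+3)).val :=
    thirdEq b2 b0 b10 b3 hAB (Ne.symm e7) (Ne.symm e8) e2 e1
  rw [q3] at e11 e19
  rw [q1] at e14
  rw [q2] at e16
  -- c(i+7), c(i-7) ∈ {A, B}, and they are adjacent
  have hcase := pairCases b2 b0 b3 b7 b14 hAB e2 e1 e9 (Ne.symm e11) e13
  rcases hcase with ⟨hA7, hB11⟩ | ⟨hB7, hA11⟩
  · -- c(i+7) = A, c(i-7) = B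
    rw [hB11] at e15
    have q8 : (c (i+8)).val = (c (i-1)).val :=
      thirdEq b3 b0 b8 b2 e1 e14 (Ne.symm e15) (Ne.symm e2) hAB
    rw [hA7] at e17
    have q10 : (c (i-8)).val = (c i).val :=
      thirdEq b3 b2 b15 b0 e2 (Ne.symm e16) e17 (Ne.symm e1) (Ne.symm hAB)
    rw [q10] at e21 e29
    have q6 : (c (i+6)).val = (c (i-1)).val :=
      thirdEq b3 b0 b6 b2 e1 e20 (Ne.symm e21) (Ne.symm e2) hAB
    rw [q8] at e18
    have q12 : (c (i-6)).val = (c i).val :=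
      thirdEq b3 b2 b13 b0 e2 (Ne.symm e19) e18 (Ne.symm e1) (Ne.symm hAB)
    rw [q6] at e24
    rw [q12] at e26
    have q9 : (c (i+9)).val = (c (i+3)).val :=
      thirdEq b2 b0 b9 b3 hAB e24 (Ne.symm e26) e2 e1
    have q13 : (c (i-5)).val = (c (i+3)).val :=
      thirdEq b2 b0 b12 b3 hAB (Ne.symm e28) e29 e2 e1
    rw [q13, q9] at e27
    exact e27 rfl
  · -- c(i+7) = B, c(i-7) = A
    rw [hA11] at e15
    have q8 : (c (i+8)).val = (c i).val :=
      thirdEq b3 b2 b8 b0 e2 e14 (Ne.symm e15) (Ne.symm e1) (Ne.symm hAB)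
    rw [hB7] at e17
    have q10 : (c (i-8)).val = (c (i-1)).val :=
      thirdEq b3 b0 b15 b2 e1 (Ne.symm e16) e17 (Ne.symm e2) hAB
    rw [q10] at e21
    have q6 : (c (i+6)).val = (c i).val :=
      thirdEq b3 b2 b6 b0 e2 e20 (Ne.symm e21) (Ne.symm e1) (Ne.symm hAB)
    rw [q8] at e18 e23
    have q12 : (c (i-6)).val = (c (i-1)).val :=
      thirdEq b3 b0 b13 b2 e1 (Ne.symm e19) e18 (Ne.symm e2) hAB
    have q5 : (c (i+5)).val = (c (i+3)).val :=
      thirdEq b2 b0 b5 b3 hAB e22 (Ne.symm e23) e2 e1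
    rw [q6] at e24
    rw [q5] at e25
    rw [q12] at e26
    exact no4 b2 b0 b3 b9 hAB (Ne.symm e2) (Ne.symm e1) (Ne.symm e26) e24 e25
end

section
/- In any proper 3-coloring of the circulant graph C18(3,4), every maximal run of consecutive equally-colored vertices has length exactly 2 or exactly 3. -/
private lemma add_assoc_aux (i a b : ZMod 18) : i + a + b = i + (a + b) := add_assoc i a b

private lemma L1 : ∀ a b x y : Fin 3, a ≠ b → x ≠ a → x ≠ b → y ≠ a → y ≠ b → x = y := by
  decide

set_option synthInstance.maxSize 5000 in
set_option maxHeartbeats 1000000 in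
private lemma endgame0 : ∀ A K X Y q p f5 f13 : Fin 3,
    ¬(K ≠ A ∧ q ≠ K ∧ p ≠ K ∧ q ≠ p ∧
      X ≠ A ∧ X ≠ K ∧ Y ≠ A ∧ Y ≠ K ∧
      f13 ≠ K ∧ f13 ≠ p ∧ f13 ≠ Y ∧
      f5 ≠ X ∧ f5 ≠ q ∧ f5 ≠ K) := by
  decide

private lemma endgame (A K X Y q p f5 f13 : Fin 3) :
    K ≠ A → q ≠ K → p ≠ K → q ≠ p →
    X ≠ A → X ≠ K → Y ≠ A → Y ≠ K →
    f13 ≠ K → f13 ≠ p → f13 ≠ Y →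
    f5 ≠ X → f5 ≠ q → f5 ≠ K → False := fun h1 h2 h3 h4 h5 h6 h7 h8 h9 h10 h11 h12 h13 h14 =>
  endgame0 A K X Y q p f5 f13 ⟨h1,h2,h3,h4,h5,h6,h7,h8,h9,h10,h11,h12,h13,h14⟩

private lemma adjC18 (j : ZMod 18) (d : ZMod 18) (hd : d = 3 ∨ d = 4) : C18.Adj (j + d) j := by
  rw [C18, SimpleGraph.fromRel_adj]
  refine ⟨?_, Or.inl ?_⟩
  · intro h
    have hd0 : d = 0 := by
      have h2 : j + d = j + 0 := by rw [add_zero]; exact h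
      exact add_left_cancel h2
    rcases hd with h' | h' <;> rw [h'] at hd0 <;> exact absurd hd0 (by decide)
  · have hdd : j + d - j = d := by ring
    rw [hdd]
    exact hd

private lemma run1_false (c : ZMod 18 → Fin 3) (hc : Proper3 c) (i : ZMod 18)
    (hL : c (i + 17) ≠ c i) (hR : c (i + 1) ≠ c i) : False := by
  have key3 : ∀ j : ZMod 18, c (j + 3) ≠ c j := fun j => hc _ _ (adjC18 j 3 (Or.inl rfl))
  have key4 : ∀ j : ZMod 18, c (j + 4) ≠ c j := fun j => hc _ _ (adjC18 j 4 (Or.inr rfl))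
  have e_0_3 : c (i + 3) ≠ c i := key3 i
  have e_0_4 : c (i + 4) ≠ c i := key4 i
  have e_14_0 : c (i) ≠ c (i + 14) := by
    have h := key4 (i + 14)
    rwa [show i + 14 + 4 = i from by
      rw [add_assoc_aux, show (14 + 4 : ZMod 18) = 0 from by decide, add_zero]] at h
  have e_15_0 : c (i) ≠ c (i + 15) := by
    have h := key3 (i + 15)
    rwa [show i + 15 + 3 = i from by
      rw [add_assoc_aux, show (15 + 3 : ZMod 18) = 0 from by decide, add_zero]] at h
  have e_1_4 : c (i + 4) ≠ c (i + 1) := by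
    have h := key3 (i + 1)
    rwa [show i + 1 + 3 = i + 4 from by
      rw [add_assoc_aux, show (1 + 3 : ZMod 18) = 4 from by decide]] at h
  have e_15_1 : c (i + 1) ≠ c (i + 15) := by
    have h := key4 (i + 15)
    rwa [show i + 15 + 4 = i + 1 from by
      rw [add_assoc_aux, show (15 + 4 : ZMod 18) = 1 from by decide]] at h
  have e_17_3 : c (i + 3) ≠ c (i + 17) := by
    have h := key4 (i + 17)
    rwa [show i + 17 + 4 = i + 3 from by
      rw [add_assoc_aux, show (17 + 4 : ZMod 18) = 3 from by decide]] at h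
  have e_14_17 : c (i + 17) ≠ c (i + 14) := by
    have h := key3 (i + 14)
    rwa [show i + 14 + 3 = i + 17 from by
      rw [add_assoc_aux, show (14 + 3 : ZMod 18) = 17 from by decide]] at h
  have e_3_7 : c (i + 7) ≠ c (i + 3) := by
    have h := key4 (i + 3)
    rwa [show i + 3 + 4 = i + 7 from by
      rw [add_assoc_aux, show (3 + 4 : ZMod 18) = 7 from by decide]] at h
  have e_4_7 : c (i + 7) ≠ c (i + 4) := by
    have h := key3 (i + 4)
    rwa [show i + 4 + 3 = i + 7 from by
      rw [add_assoc_aux, show (4 + 3 : ZMod 18) = 7 from by decide]] at h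
  have e_11_14 : c (i + 14) ≠ c (i + 11) := by
    have h := key3 (i + 11)
    rwa [show i + 11 + 3 = i + 14 from by
      rw [add_assoc_aux, show (11 + 3 : ZMod 18) = 14 from by decide]] at h
  have e_11_15 : c (i + 15) ≠ c (i + 11) := by
    have h := key4 (i + 11)
    rwa [show i + 11 + 4 = i + 15 from by
      rw [add_assoc_aux, show (11 + 4 : ZMod 18) = 15 from by decide]] at h
  have e_7_11 : c (i + 11) ≠ c (i + 7) := by
    have h := key4 (i + 7)
    rwa [show i + 7 + 4 = i + 11 from by
      rw [add_assoc_aux, show (7 + 4 : ZMod 18) = 11 from by decide]] at h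
  have e_4_8 : c (i + 8) ≠ c (i + 4) := by
    have h := key4 (i + 4)
    rwa [show i + 4 + 4 = i + 8 from by
      rw [add_assoc_aux, show (4 + 4 : ZMod 18) = 8 from by decide]] at h
  have e_10_14 : c (i + 14) ≠ c (i + 10) := by
    have h := key4 (i + 10)
    rwa [show i + 10 + 4 = i + 14 from by
      rw [add_assoc_aux, show (10 + 4 : ZMod 18) = 14 from by decide]] at h
  have e_12_15 : c (i + 15) ≠ c (i + 12) := by
    have h := key3 (i + 12)
    rwa [show i + 12 + 3 = i + 15 from by
      rw [add_assoc_aux, show (12 + 3 : ZMod 18) = 15 from by decide]] at h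
  have e_7_10 : c (i + 10) ≠ c (i + 7) := by
    have h := key3 (i + 7)
    rwa [show i + 7 + 3 = i + 10 from by
      rw [add_assoc_aux, show (7 + 3 : ZMod 18) = 10 from by decide]] at h
  have e_8_11 : c (i + 11) ≠ c (i + 8) := by
    have h := key3 (i + 8)
    rwa [show i + 8 + 3 = i + 11 from by
      rw [add_assoc_aux, show (8 + 3 : ZMod 18) = 11 from by decide]] at h
  have e_8_12 : c (i + 12) ≠ c (i + 8) := by
    have h := key4 (i + 8)
    rwa [show i + 8 + 4 = i + 12 from by
      rw [add_assoc_aux, show (8 + 4 : ZMod 18) = 12 from by decide]] at h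
  have e_3_6 : c (i + 6) ≠ c (i + 3) := by
    have h := key3 (i + 3)
    rwa [show i + 3 + 3 = i + 6 from by
      rw [add_assoc_aux, show (3 + 3 : ZMod 18) = 6 from by decide]] at h
  have e_6_10 : c (i + 10) ≠ c (i + 6) := by
    have h := key4 (i + 6)
    rwa [show i + 6 + 4 = i + 10 from by
      rw [add_assoc_aux, show (6 + 4 : ZMod 18) = 10 from by decide]] at h
  have e_6_9 : c (i + 9) ≠ c (i + 6) := by
    have h := key3 (i + 6)
    rwa [show i + 6 + 3 = i + 9 from by
      rw [add_assoc_aux, show (6 + 3 : ZMod 18) = 9 from by decide]] at h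
  have e_9_12 : c (i + 12) ≠ c (i + 9) := by
    have h := key3 (i + 9)
    rwa [show i + 9 + 3 = i + 12 from by
      rw [add_assoc_aux, show (9 + 3 : ZMod 18) = 12 from by decide]] at h
  have e_9_13 : c (i + 13) ≠ c (i + 9) := by
    have h := key4 (i + 9)
    rwa [show i + 9 + 4 = i + 13 from by
      rw [add_assoc_aux, show (9 + 4 : ZMod 18) = 13 from by decide]] at h
  have e_10_13 : c (i + 13) ≠ c (i + 10) := by
    have h := key3 (i + 10)
    rwa [show i + 10 + 3 = i + 13 from by
      rw [add_assoc_aux, show (10 + 3 : ZMod 18) = 13 from by decide]] at h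
  have e_13_17 : c (i + 17) ≠ c (i + 13) := by
    have h := key4 (i + 13)
    rwa [show i + 13 + 4 = i + 17 from by
      rw [add_assoc_aux, show (13 + 4 : ZMod 18) = 17 from by decide]] at h
  have e_1_5 : c (i + 5) ≠ c (i + 1) := by
    have h := key4 (i + 1)
    rwa [show i + 1 + 4 = i + 5 from by
      rw [add_assoc_aux, show (1 + 4 : ZMod 18) = 5 from by decide]] at h
  have e_5_8 : c (i + 8) ≠ c (i + 5) := by
    have h := key3 (i + 5)
    rwa [show i + 5 + 3 = i + 8 from by
      rw [add_assoc_aux, show (5 + 3 : ZMod 18) = 8 from by decide]] at h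
  have e_5_9 : c (i + 9) ≠ c (i + 5) := by
    have h := key4 (i + 5)
    rwa [show i + 5 + 4 = i + 9 from by
      rw [add_assoc_aux, show (5 + 4 : ZMod 18) = 9 from by decide]] at h
  have h4_15 : c (i + 4) = c (i + 15) :=
    L1 (c i) (c (i + 1)) _ _ hR.symm e_0_4 e_1_4 e_15_0.symm e_15_1.symm
  have h3_14 : c (i + 3) = c (i + 14) :=
    L1 (c i) (c (i + 17)) _ _ hL.symm e_0_3 e_17_3 e_14_0.symm e_14_17.symm
  by_cases h34 : c (i + 3) = c (i + 4)
  · have h3_15 : c (i + 3) = c (i + 15) := h34.trans h4_15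
    have hq : c (i + 7) ≠ c (i + 3) := e_3_7
    have hp : c (i + 10) ≠ c (i + 3) := by rw [h3_14]; exact e_10_14.symm
    have h8_3 : c (i + 8) ≠ c (i + 3) := by rw [h34]; exact e_4_8
    have h11_3 : c (i + 11) ≠ c (i + 3) := by rw [h3_14]; exact e_11_14.symm
    have h10_11 : c (i + 10) = c (i + 11) :=
      L1 (c (i + 3)) (c (i + 7)) _ _ hq.symm hp e_7_10 h11_3 e_7_11
    have h11_12 : c (i + 11) = c (i + 12) :=
      L1 (c (i + 3)) (c (i + 8)) _ _ h8_3.symm h11_3 e_8_11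
        (by rw [h3_15]; exact e_12_15.symm) e_8_12
    have h6_7 : c (i + 6) = c (i + 7) :=
      L1 (c (i + 3)) (c (i + 10)) _ _ hp.symm e_3_6 e_6_10.symm hq e_7_10.symm
    have h8_7 : c (i + 8) = c (i + 7) :=
      L1 (c (i + 3)) (c (i + 10)) _ _ hp.symm h8_3
        (by rw [h10_11]; exact e_8_11.symm) hq e_7_10.symm
    have h9_3 : c (i + 9) = c (i + 3) :=
      L1 (c (i + 7)) (c (i + 10)) _ _ e_7_10.symm
        (by rw [← h6_7]; exact e_6_9) (by rw [h10_11, h11_12]; exact e_9_12.symm)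
        hq.symm hp.symm
    exact endgame (c i) (c (i + 3)) (c (i + 1)) (c (i + 17)) (c (i + 7)) (c (i + 10))
      (c (i + 5)) (c (i + 13))
      e_0_3 hq hp e_7_10.symm hR (by rw [h34]; exact e_1_4.symm) hL e_17_3.symm
      (by rw [← h9_3]; exact e_9_13) e_10_13 e_13_17.symm
      e_1_5 (by rw [← h8_7]; exact e_5_8.symm) (by rw [← h9_3]; exact e_5_9.symm)
  · have h7_11 : c (i + 7) = c (i + 11) :=
      L1 (c (i + 3)) (c (i + 4)) _ _ h34 e_3_7 e_4_7
        (by rw [h3_14]; exact e_11_14.symm) (by rw [h4_15]; exact e_11_15.symm)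
    exact e_7_11 h7_11.symm

/-- Every maximal monochromatic run has length exactly 2 or 3. -/
theorem stmt_4 (c : ZMod 18 → Fin 3) (hc : Proper3 c)
    (i : ZMod 18) (m : ℕ) (hm : 1 ≤ m)
    (hrun : ∀ k : ℕ, k < m → c (i + (k : ZMod 18)) = c i)
    (hleft : c (i - 1) ≠ c i) (hright : c (i + (m : ZMod 18)) ≠ c i) :
    m = 2 ∨ m = 3 := by
  have key3 : ∀ j : ZMod 18, c (j + 3) ≠ c j := fun j => hc _ _ (adjC18 j 3 (Or.inl rfl))
  have hm3 : m ≤ 3 := by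
    by_contra h
    push_neg at h
    have h3 := hrun 3 (by omega)
    rw [show ((3 : ℕ) : ZMod 18) = 3 from by norm_num] at h3
    exact key3 i h3
  interval_cases m
  · exfalso
    have hL : c (i + 17) ≠ c i := by
      rwa [show i - 1 = i + 17 from by
        rw [sub_eq_add_neg, show (-1 : ZMod 18) = 17 from by decide]] at hleft
    have hR : c (i + 1) ≠ c i := by
      rwa [show ((1 : ℕ) : ZMod 18) = 1 from by norm_num] at hright
    exact run1_false c hc i hL hR
  · exact Or.inl rfl
  · exact Or.inr rfl
end

section
/- In any proper 3-coloring of the circulant graph C18(3,4), maximal monochromatic runs of length 2 and length 3 cannot both occur; the coloring consists either entirely of six runs of length 3 or entirely of nine runs of length 2. -/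
set_option maxRecDepth 40000
set_option synthInstance.maxSize 4000
set_option synthInstance.maxHeartbeats 1000000
set_option maxHeartbeats 2000000

/-- A maximal monochromatic run of length `m` starting at `i`. -/
def Run (c : ZMod 18 → Fin 3) (i : ZMod 18) (m : ℕ) : Prop :=
  (∀ k : ℕ, k < m → c (i + (k : ZMod 18)) = c i) ∧
    c (i - 1) ≠ c i ∧ c (i + (m : ZMod 18)) ≠ c i

lemma csp1 : ∀ x0 : Fin 3, ∀ x1 : Fin 3, ∀ x2 : Fin 3, ∀ x3 : Fin 3, x3 ≠ x0 → ∀ x4 : Fin 3, x4 ≠ x0 → x4 ≠ x1 → x3 ≠ x4 → ∀ x5 : Fin 3, x5 ≠ x1 → x5 ≠ x2 → x5 ≠ x4 → ∀ x6 : Fin 3, x6 ≠ x2 → x6 ≠ x3 → ∀ x7 : Fin 3, x7 ≠ x3 → x7 ≠ x4 → ∀ x8 : Fin 3, x8 ≠ x4 → x8 ≠ x5 → ∀ x9 : Fin 3, x9 ≠ x5 → x9 ≠ x6 → ∀ x10 : Fin 3, x10 ≠ x6 → x10 ≠ x7 → ∀ x11 : Fin 3, x11 ≠ x7 → x11 ≠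 x8 → ∀ x12 : Fin 3, x12 ≠ x8 → x12 ≠ x9 → ∀ x13 : Fin 3, x13 ≠ x9 → x13 ≠ x10 → ∀ x14 : Fin 3, x14 ≠ x0 → x14 ≠ x10 → x14 ≠ x11 → ∀ x15 : Fin 3, x15 ≠ x0 → x15 ≠ x1 → x15 ≠ x11 → x15 ≠ x12 → ∀ x16 : Fin 3, x16 ≠ x1 → x16 ≠ x2 → x16 ≠ x12 → x16 ≠ x13 → False := by decide

lemma csp2a : ∀ x0 : Fin 3, ∀ x1 : Fin 3, x0 ≠ x1 → ∀ x2 : Fin 3, x1 = x2 → ∀ x3 : Fin 3, x3 ≠ x0 → x3 ≠ x1 → ∀ x4 : Fin 3, x4 ≠ x0 → x4 ≠ x1 → x4 ≠ x3 → ∀ x5 : Fin 3, x5 ≠ x1 → x5 ≠ x2 → ∀ x6 : Fin 3, x6 ≠ x2 → x6 ≠ x3 → ∀ x7 : Fin 3, x7 ≠ x3 → x7 ≠ x4 → False := by decide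

lemma csp2b : ∀ x0 : Fin 3, ∀ x1 : Fin 3, ∀ x2 : Fin 3, ∀ x3 : Fin 3, x3 ≠ x0 → ∀ x4 : Fin 3, x4 ≠ x0 → x4 ≠ x1 → ∀ x5 : Fin 3, x5 ≠ x1 → x5 ≠ x2 → ∀ x6 : Fin 3, x6 ≠ x2 → x6 ≠ x3 → ∀ x7 : Fin 3, x7 ≠ x3 → x7 ≠ x4 → x6 ≠ x7 → ∀ x8 : Fin 3, x8 ≠ x4 → x8 ≠ x5 → x7 = x8 → ∀ x9 : Fin 3, x9 ≠ x5 → x9 ≠ x6 → x9 ≠ x7 → ∀ x10 : Fin 3, x10 ≠ x6 → x10 ≠ x7 → x9 = x10 → ∀ x11 : Fin 3, x11 ≠ x7 → x11 ≠ x8 → x11 = x9 → ∀ x12 : Fin 3, x12 ≠ x8 → x12 ≠ x9 → ∀ x13 : Fin 3, x13 ≠ x9 → x13 ≠ x10 → ∀ x14 : Fin 3, x14 ≠ x0 → x14 ≠ x10 → x14 ≠ x11 → ∀ x15 : Fin 3, x15 ≠ x0 → x15 ≠ x1 → x15 ≠ x11 → x15 ≠ x12 → False := by decide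

lemma hne (c : ZMod 18 → Fin 3) (hc : Proper3 c) (i a b : ZMod 18)
    (h : a - b = 3 ∨ a - b = 4 ∨ b - a = 3 ∨ b - a = 4) (hab : a ≠ b) :
    c (i + a) ≠ c (i + b) := by
  apply hc
  rw [C18, SimpleGraph.fromRel_adj]
  refine ⟨fun he => hab (add_left_cancel he), ?_⟩
  have e1 : (i+a) - (i+b) = a - b := by ring
  have e2 : (i+b) - (i+a) = b - a := by ring
  rcases h with h|h|h|h
  · exact Or.inl (Or.inl (by rw [e1, h]))
  · exact Or.inl (Or.inr (by rw [e1, h]))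
  · exact Or.inr (Or.inl (by rw [e2, h]))
  · exact Or.inr (Or.inr (by rw [e2, h]))

lemma shif (i s o a : ZMod 18) (h : s + o = a) : i + a = i + s + o := by
  rw [← h, add_assoc]

lemma shif0 (i s o : ZMod 18) (h : s + o = 0) : i = i + s + o := by
  rw [add_assoc, h, add_zero]

lemma shifm1 (i s o : ZMod 18) (h : s + o = 17) : i - 1 = i + s + o := by
  rw [add_assoc, h, show (17:ZMod 18) = -1 from by decide, ← sub_eq_add_neg]

lemma noSing (c : ZMod 18 → Fin 3) (hc : Proper3 c) (i : ZMod 18)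
    (h1 : c (i - 1) ≠ c i) (h2 : c (i + 1) ≠ c i) : False := by
  have h1' : c (i + 14 + 3) ≠ c (i + 14 + 4) := by
    rw [← shifm1 i 14 3 (by decide), ← shif0 i 14 4 (by decide)]; exact h1
  have h2' : c (i + 14 + 5) ≠ c (i + 14 + 4) := by
    rw [← shif i 14 5 1 (by decide), ← shif0 i 14 4 (by decide)]; exact h2
  exact csp1 (c (i + 14 + 0)) (c (i + 14 + 1)) (c (i + 14 + 2)) (c (i + 14 + 3)) (hne c hc (i + 14) 3 0 (by decide) (by decide)) (c (i + 14 + 4)) (hne c hc (i + 14) 4 0 (by decide) (by decide)) (hne c hc (i + 14) 4 1 (by decide) (by decide)) h1' (c (i + 14 + 5)) (hne c hc (i + 14) 5 1 (by decide) (by decide)) (hne c hc (i + 14) 5 2 (by decide) (by decide)) h2' (c (i + 14 + 6)) (hne c hc (i + 14) 6 2 (by decide) (by decide)) (hne c hc (i + 14) 6 3 (by decide) (by decide)) (c (i + 14 + 7)) (hne c hc (i + 14) 7 3 (by decide) (by decide)) (hne c hc (i + 14) 7 4 (by decide) (by decide)) (c (i + 14 + 8)) (hne c hc (i + 14) 8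 4 (by decide) (by decide)) (hne c hc (i + 14) 8 5 (by decide) (by decide)) (c (i + 14 + 9)) (hne c hc (i + 14) 9 5 (by decide) (by decide)) (hne c hc (i + 14) 9 6 (by decide) (by decide)) (c (i + 14 + 10)) (hne c hc (i + 14) 10 6 (by decide) (by decide)) (hne c hc (i + 14) 10 7 (by decide) (by decide)) (c (i + 14 + 11)) (hne c hc (i + 14) 11 7 (by decide) (by decide)) (hne c hc (i + 14) 11 8 (by decide) (by decide)) (c (i + 14 + 12)) (hne c hc (i + 14) 12 8 (by decide) (by decide)) (hne c hc (i + 14) 12 9 (by decide) (by decide)) (c (i + 14 + 13)) (hne c hc (i + 14) 13 9 (by decide) (by decide)) (hne c hc (i + 14) 13 10 (by decide) (by decide)) (c (i + 14 + 14)) (hne c hc (i + 14) 14 0 (by decide) (by decide)) (hne c hc (i + 14) 14 10 (by decide) (by decide)) (hne c hc (i + 14) 14 11 (by decide) (by decide)) (c (i + 14 + 15)) (hne c hc (i + 14) 15 0 (by decide) (by decide)) (hne c hc (i + 14) 15 1 (by decide) (by decide)) (hne c hc (i + 14) 15 11 (by decide) (by decide)) (hne c hc (i + 14) 15 12 (by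 decide) (by decide)) (c (i + 14 + 16)) (hne c hc (i + 14) 16 1 (by decide) (by decide)) (hne c hc (i + 14) 16 2 (by decide) (by decide)) (hne c hc (i + 14) 16 12 (by decide) (by decide)) (hne c hc (i + 14) 16 13 (by decide) (by decide))

lemma step2 (c : ZMod 18 → Fin 3) (hc : Proper3 c) (i : ZMod 18)
    (h : Run c i 2) : Run c (i + 2) 2 := by
  have hA : c (i + 1) = c i := by
    have := h.1 1 (by omega); rwa [Nat.cast_one] at this
  have hL : c (i - 1) ≠ c i := h.2.1
  have hR : c (i + 2) ≠ c i := by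
    have := h.2.2; rwa [show ((2:ℕ):ZMod 18) = 2 from by norm_num] at this
  have e23 : c (i + 2) = c (i + 3) := by
    by_contra hne23
    have a1 : c (i + 17 + 0) ≠ c (i + 17 + 1) := by
      rw [← shifm1 i 17 0 (by decide), ← shif0 i 17 1 (by decide)]; exact hL
    have a2 : c (i + 17 + 1) = c (i + 17 + 2) := by
      rw [← shif0 i 17 1 (by decide), ← shif i 17 2 1 (by decide)]; exact hA.symm
    have a3 : c (i + 17 + 3) ≠ c (i + 17 + 1) := by
      rw [← shif i 17 3 2 (by decide), ← shif0 i 17 1 (by decide)]; exact hR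
    have a4 : c (i + 17 + 4) ≠ c (i + 17 + 3) := by
      rw [← shif i 17 4 3 (by decide), ← shif i 17 3 2 (by decide)]
      exact fun hh => hne23 hh.symm
    exact csp2a (c (i + 17 + 0)) (c (i + 17 + 1)) a1 (c (i + 17 + 2)) a2 (c (i + 17 + 3)) (hne c hc (i + 17) 3 0 (by decide) (by decide)) a3 (c (i + 17 + 4)) (hne c hc (i + 17) 4 0 (by decide) (by decide)) (hne c hc (i + 17) 4 1 (by decide) (by decide)) a4 (c (i + 17 + 5)) (hne c hc (i + 17) 5 1 (by decide) (by decide)) (hne c hc (i + 17) 5 2 (by decide) (by decide)) (c (i + 17 + 6)) (hne c hc (i + 17) 6 2 (by decide) (by decide)) (hne c hc (i + 17) 6 3 (by decide) (by decide)) (c (i + 17 + 7)) (hne c hc (i + 17) 7 3 (by decide) (by decide)) (hne c hc (i + 17) 7 4 (by decide) (by decide))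
  have h24 : c (i + 4) ≠ c (i + 2) := by
    intro he
    have b1 : c (i + 11 + 6) ≠ c (i + 11 + 7) := by
      rw [← shifm1 i 11 6 (by decide), ← shif0 i 11 7 (by decide)]; exact hL
    have b2 : c (i + 11 + 7) = c (i + 11 + 8) := by
      rw [← shif0 i 11 7 (by decide), ← shif i 11 8 1 (by decide)]; exact hA.symm
    have b3 : c (i + 11 + 9) ≠ c (i + 11 + 7) := by
      rw [← shif i 11 9 2 (by decide), ← shif0 i 11 7 (by decide)]; exact hR
    have b4 : c (i + 11 + 9) = c (i + 11 + 10) := by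
      rw [← shif i 11 9 2 (by decide), ← shif i 11 10 3 (by decide)]; exact e23
    have b5 : c (i + 11 + 11) = c (i + 11 + 9) := by
      rw [← shif i 11 11 4 (by decide), ← shif i 11 9 2 (by decide)]; exact he
    exact csp2b (c (i + 11 + 0)) (c (i + 11 + 1)) (c (i + 11 + 2)) (c (i + 11 + 3)) (hne c hc (i + 11) 3 0 (by decide) (by decide)) (c (i + 11 + 4)) (hne c hc (i + 11) 4 0 (by decide) (by decide)) (hne c hc (i + 11) 4 1 (by decide) (by decide)) (c (i + 11 + 5)) (hne c hc (i + 11) 5 1 (by decide) (by decide)) (hne c hc (i + 11) 5 2 (by decide) (by decide)) (c (i + 11 + 6)) (hne c hc (i + 11) 6 2 (by decide) (by decide)) (hne c hc (i + 11) 6 3 (by decide) (by decide)) (c (i + 11 + 7)) (hne c hc (i + 11) 7 3 (by decide) (by decide)) (hne c hc (i + 11) 7 4 (by decide) (by decide)) b1 (c (i + 11 + 8)) (hne c hc (i + 11) 8 4 (by decide) (by decide)) (hne c hc (i + 11) 8 5 (by decide) (by decide)) b2 (c (i + 11 + 9)) (hne c hc (i + 11) 9 5 (by decide) (by decide)) (hne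 c hc (i + 11) 9 6 (by decide) (by decide)) b3 (c (i + 11 + 10)) (hne c hc (i + 11) 10 6 (by decide) (by decide)) (hne c hc (i + 11) 10 7 (by decide) (by decide)) b4 (c (i + 11 + 11)) (hne c hc (i + 11) 11 7 (by decide) (by decide)) (hne c hc (i + 11) 11 8 (by decide) (by decide)) b5 (c (i + 11 + 12)) (hne c hc (i + 11) 12 8 (by decide) (by decide)) (hne c hc (i + 11) 12 9 (by decide) (by decide)) (c (i + 11 + 13)) (hne c hc (i + 11) 13 9 (by decide) (by decide)) (hne c hc (i + 11) 13 10 (by decide) (by decide)) (c (i + 11 + 14)) (hne c hc (i + 11) 14 0 (by decide) (by decide)) (hne c hc (i + 11) 14 10 (by decide) (by decide)) (hne c hc (i + 11) 14 11 (by decide) (by decide)) (c (i + 11 + 15)) (hne c hc (i + 11) 15 0 (by decide) (by decide)) (hne c hc (i + 11) 15 1 (by decide) (by decide)) (hne c hc (i + 11) 15 11 (by decide) (by decide)) (hne c hc (i + 11) 15 12 (by decide) (by decide))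
  refine ⟨?_, ?_, ?_⟩
  · intro k hk
    interval_cases k
    · simp
    · rw [Nat.cast_one, add_assoc, show (2:ZMod 18)+1 = 3 from by decide]
      exact e23.symm
  · have e : i + 2 - 1 = i + 1 := by
      rw [show (2:ZMod 18) = 1+1 from by decide, ← add_assoc, add_sub_cancel_right]
    rw [e, hA]
    exact fun hh => hR hh.symm
  · rw [show ((2:ℕ):ZMod 18) = 2 from by norm_num, add_assoc,
      show (2:ZMod 18)+2 = 4 from by decide]
    exact h24

lemma all2 (c : ZMod 18 → Fin 3) (hc : Proper3 c) (i : ZMod 18)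
    (h : Run c i 2) : ∀ t : ℕ, Run c (i + ((2*t : ℕ) : ZMod 18)) 2 := by
  intro t
  induction t with
  | zero => simpa using h
  | succ t ih =>
    have hh := step2 c hc _ ih
    have e : (i + ((2*t:ℕ):ZMod 18)) + 2 = i + ((2*(t+1):ℕ) : ZMod 18) := by
      push_cast; ring
    rwa [e] at hh

lemma no1 (c : ZMod 18 → Fin 3) (hc : Proper3 c) (i : ZMod 18) (h : Run c i 1) : False := by
  refine noSing c hc i h.2.1 ?_
  have := h.2.2; rwa [Nat.cast_one] at this

lemma no4_s5 (c : ZMod 18 → Fin 3) (hc : Proper3 c) (i : ZMod 18) (m : ℕ)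
    (h : Run c i m) (hm : 4 ≤ m) : False := by
  have h3' := h.1 3 (by omega)
  rw [show ((3:ℕ):ZMod 18) = 3 from by norm_num] at h3'
  have hadj : C18.Adj (i+3) i := by
    rw [C18, SimpleGraph.fromRel_adj]
    refine ⟨?_, Or.inl (Or.inl (by ring))⟩
    intro he
    have h30 : (3:ZMod 18) = 0 := by
      calc (3:ZMod 18) = (i+3) - i := by ring
        _ = i - i := by rw [he]
        _ = 0 := sub_self i
    exact absurd h30 (by decide)
  exact hc (i+3) i hadj h3'

lemma mix (c : ZMod 18 → Fin 3) (hc : Proper3 c) (i j : ZMod 18)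
    (h2 : Run c i 2) (h3 : Run c j 3) : False := by
  have hs : (((j - i).val : ℕ) : ZMod 18) = j - i := ZMod.natCast_rightInverse (j - i)
  set s := (j - i).val with hsdef
  rcases Nat.even_or_odd s with ⟨t, ht⟩ | ⟨t, ht⟩
  · have hr := all2 c hc i h2 t
    have e : i + ((2*t : ℕ) : ZMod 18) = j := by
      rw [show 2*t = s from by omega, hs]; ring
    rw [e] at hr
    exact hr.2.2 (h3.1 2 (by omega))
  · have hr := all2 c hc i h2 t
    have hr1 : c ((i + ((2*t:ℕ):ZMod 18)) + 1) = c (i + ((2*t:ℕ):ZMod 18)) := by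
      have := hr.1 1 (by omega); rwa [Nat.cast_one] at this
    have ej : j = (i + ((2*t:ℕ):ZMod 18)) + 1 := by
      have e1 : ((s:ℕ):ZMod 18) = ((2*t:ℕ):ZMod 18) + 1 := by
        rw [ht]; push_cast; ring
      calc j = i + (j - i) := by ring
        _ = i + ((s:ℕ):ZMod 18) := by rw [hs]
        _ = (i + ((2*t:ℕ):ZMod 18)) + 1 := by rw [e1, add_assoc]
    have e1 : j - 1 = i + ((2*t:ℕ):ZMod 18) := by
      rw [ej]; exact add_sub_cancel_right _ _
    exact h3.2.1 (by rw [e1, ej]; exact hr1.symm)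

/-- Runs of length 2 and 3 cannot both occur: the coloring consists entirely of
runs of length 3 or entirely of runs of length 2. -/
theorem stmt_5 (c : ZMod 18 → Fin 3) (hc : Proper3 c) :
    (¬ ((∃ i, Run c i 2) ∧ (∃ j, Run c j 3))) ∧
    ((∀ i m, 1 ≤ m → Run c i m → m = 3) ∨ (∀ i m, 1 ≤ m → Run c i m → m = 2)) := by
  constructor
  · rintro ⟨⟨i, hi2⟩, ⟨j, hj3⟩⟩
    exact mix c hc i j hi2 hj3
  · by_cases hex : ∃ i, Run c i 2
    · right
      rintro i m hm hr
      have hle : m ≤ 3 := by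
        by_contra hgt
        exact no4_s5 c hc i m hr (by omega)
      interval_cases m
      · exact (no1 c hc i hr).elim
      · rfl
      · obtain ⟨i2, hi2⟩ := hex
        exact (mix c hc i2 i hi2 hr).elim
    · left
      rintro i m hm hr
      have hle : m ≤ 3 := by
        by_contra hgt
        exact no4_s5 c hc i m hr (by omega)
      interval_cases m
      · exact (no1 c hc i hr).elim
      · exact (hex ⟨i, hr⟩).elim
      · rfl
end

section
/- In any proper 3-coloring of the circulant graph C18(3,4), every vertex has neighbors of both colors other than its own; i.e., for each vertex i, the set of colors appearing on the neighbors of i equals {1,2,3} \ {c(i)}. -/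
lemma adj_of (u v : ZMod 18) (h : u ≠ v ∧ (u - v = 3 ∨ u - v = 4 ∨ v - u = 3 ∨ v - u = 4)) :
    C18.Adj u v := by
  rw [C18, SimpleGraph.fromRel_adj]
  tauto

lemma adj_add (i k : ZMod 18) (h : k = 3 ∨ k = 4 ∨ k = 14 ∨ k = 15) :
    C18.Adj i (i + k) := by
  apply adj_of
  constructor
  · have hk : k ≠ 0 := by rcases h with rfl | rfl | rfl | rfl <;> decide
    exact fun he => hk (left_eq_add.mp he)
  · rcases h with rfl | rfl | rfl | rfl
    · right; right; left; ring
    · right; right; right; ring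
    · right; left
      have : i - (i + 14) = -14 := by ring
      rw [this]; decide
    · left
      have : i - (i + 15) = -15 := by ring
      rw [this]; decide

lemma hval (c : ZMod 18 → Fin 3) (hc : Proper3 c) (u v : ZMod 18) (h : C18.Adj u v) :
    (c u).val ≠ (c v).val := by
  intro hv
  exact hc u v h (Fin.ext hv)

lemma key0 (c : ZMod 18 → Fin 3) (hc : Proper3 c)
    (h1 : c 3 = c 4) (h2 : c 4 = c 14) (h3 : c 14 = c 15) : False := by
  have e1_4 := hval c hc 1 4 (adj_of 1 4 (by decide))
  have e1_5 := hval c hc 1 5 (adj_of 1 5 (by decide))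
  have e1_15 := hval c hc 1 15 (adj_of 1 15 (by decide))
  have e1_16 := hval c hc 1 16 (adj_of 1 16 (by decide))
  have e2_5 := hval c hc 2 5 (adj_of 2 5 (by decide))
  have e2_6 := hval c hc 2 6 (adj_of 2 6 (by decide))
  have e2_16 := hval c hc 2 16 (adj_of 2 16 (by decide))
  have e2_17 := hval c hc 2 17 (adj_of 2 17 (by decide))
  have e3_6 := hval c hc 3 6 (adj_of 3 6 (by decide))
  have e3_17 := hval c hc 3 17 (adj_of 3 17 (by decide))
  have e4_8 := hval c hc 4 8 (adj_of 4 8 (by decide))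
  have e5_8 := hval c hc 5 8 (adj_of 5 8 (by decide))
  have e5_9 := hval c hc 5 9 (adj_of 5 9 (by decide))
  have e6_9 := hval c hc 6 9 (adj_of 6 9 (by decide))
  have e6_10 := hval c hc 6 10 (adj_of 6 10 (by decide))
  have e8_12 := hval c hc 8 12 (adj_of 8 12 (by decide))
  have e9_12 := hval c hc 9 12 (adj_of 9 12 (by decide))
  have e9_13 := hval c hc 9 13 (adj_of 9 13 (by decide))
  have e10_13 := hval c hc 10 13 (adj_of 10 13 (by decide))
  have e10_14 := hval c hc 10 14 (adj_of 10 14 (by decide))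
  have e12_15 := hval c hc 12 15 (adj_of 12 15 (by decide))
  have e12_16 := hval c hc 12 16 (adj_of 12 16 (by decide))
  have e13_16 := hval c hc 13 16 (adj_of 13 16 (by decide))
  have e13_17 := hval c hc 13 17 (adj_of 13 17 (by decide))
  have e14_17 := hval c hc 14 17 (adj_of 14 17 (by decide))
  have q1 : (c 1).val < 3 := (c 1).is_lt
  have q2 : (c 2).val < 3 := (c 2).is_lt
  have q3 : (c 3).val < 3 := (c 3).is_lt
  have q4 : (c 4).val < 3 := (c 4).is_lt
  have q5 : (c 5).val < 3 := (c 5).is_lt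
  have q6 : (c 6).val < 3 := (c 6).is_lt
  have q8 : (c 8).val < 3 := (c 8).is_lt
  have q9 : (c 9).val < 3 := (c 9).is_lt
  have q10 : (c 10).val < 3 := (c 10).is_lt
  have q12 : (c 12).val < 3 := (c 12).is_lt
  have q13 : (c 13).val < 3 := (c 13).is_lt
  have q14 : (c 14).val < 3 := (c 14).is_lt
  have q15 : (c 15).val < 3 := (c 15).is_lt
  have q16 : (c 16).val < 3 := (c 16).is_lt
  have q17 : (c 17).val < 3 := (c 17).is_lt
  have v1 : (c 3).val = (c 4).val := by rw [h1]
  have v2 : (c 4).val = (c 14).val := by rw [h2]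
  have v3 : (c 14).val = (c 15).val := by rw [h3]
  omega

lemma shift_proper (c : ZMod 18 → Fin 3) (hc : Proper3 c) (i : ZMod 18) :
    Proper3 (fun j => c (i + j)) := by
  intro u v h
  apply hc (i + u) (i + v)
  rw [C18, SimpleGraph.fromRel_adj] at h ⊢
  obtain ⟨hne, hr⟩ := h
  refine ⟨fun he => hne (add_left_cancel he), ?_⟩
  have h1 : i + u - (i + v) = u - v := by ring
  have h2 : i + v - (i + u) = v - u := by ring
  rw [h1, h2]
  exact hr

lemma key_s6 (c : ZMod 18 → Fin 3) (hc : Proper3 c) (i : ZMod 18)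
    (h1 : c (i + 3) = c (i + 4)) (h2 : c (i + 4) = c (i + 14)) (h3 : c (i + 14) = c (i + 15)) :
    False :=
  key0 (fun j => c (i + j)) (shift_proper c hc i) h1 h2 h3

lemma fin3_eq : ∀ x y a b : Fin 3, a ≠ b → x ≠ a → x ≠ b → y ≠ a → y ≠ b → x = y := by decide

/-- Every vertex has neighbors of both colors other than its own. -/
theorem stmt_6 (c : ZMod 18 → Fin 3) (hc : Proper3 c) (i : ZMod 18) :
    {a : Fin 3 | ∃ j : ZMod 18, C18.Adj i j ∧ c j = a} = {a : Fin 3 | a ≠ c i} := by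
  ext a
  simp only [Set.mem_setOf_eq]
  constructor
  · rintro ⟨j, hadj, rfl⟩
    exact fun h => hc i j hadj h.symm
  · intro ha
    have a3 : C18.Adj i (i + 3) := adj_add i 3 (by tauto)
    have a4 : C18.Adj i (i + 4) := adj_add i 4 (by tauto)
    have a14 : C18.Adj i (i + 14) := adj_add i 14 (by tauto)
    have a15 : C18.Adj i (i + 15) := adj_add i 15 (by tauto)
    by_cases p3 : c (i + 3) = a
    · exact ⟨i + 3, a3, p3⟩
    by_cases p4 : c (i + 4) = a
    · exact ⟨i + 4, a4, p4⟩
    by_cases p14 : c (i + 14) = a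
    · exact ⟨i + 14, a14, p14⟩
    by_cases p15 : c (i + 15) = a
    · exact ⟨i + 15, a15, p15⟩
    exfalso
    have n3 : c (i + 3) ≠ c i := fun h => hc i (i + 3) a3 h.symm
    have n4 : c (i + 4) ≠ c i := fun h => hc i (i + 4) a4 h.symm
    have n14 : c (i + 14) ≠ c i := fun h => hc i (i + 14) a14 h.symm
    have n15 : c (i + 15) ≠ c i := fun h => hc i (i + 15) a15 h.symm
    exact key_s6 c hc i (fin3_eq _ _ a (c i) ha p3 n3 p4 n4)
      (fin3_eq _ _ a (c i) ha p4 n4 p14 n14) (fin3_eq _ _ a (c i) ha p14 n14 p15 n15)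
end

section
/- Let ε > 0 and consider colorings of R² where no two points of the same color are at a distance in [1−ε, 1+ε]. Suppose there exist a point A such that every neighborhood of A contains points of 3 distinct colors, and a point B with |A−B| = 1 such that every neighborhood of B contains points of 2 colors distinct from those at A. Then the third vertex C of the equilateral triangle ABC of side 1 must receive a 6th color. Hence at least 6 colors are required under these assumptions. -/
/-- The trichromatic/bichromatic triangle argument: if `A` is tri-chromatic, `B` is
bi-chromatic with colors distinct from those of `A`, and `ABC` is a unit
equilateral triangle, then `C` receives a sixth color. -/
theorem stmt_14 (ε : ℝ) (hε : 0 < ε) (c : EuclideanSpace ℝ (Fin 2) → ℕ)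
    (hproper : ∀ x y, dist x y ∈ Set.Icc (1 - ε) (1 + ε) → c x ≠ c y)
    (A B C : EuclideanSpace ℝ (Fin 2))
    (hAB : dist A B = 1) (hAC : dist A C = 1) (hBC : dist B C = 1)
    (a₁ a₂ a₃ b₁ b₂ : ℕ)
    (hdist : [a₁, a₂, a₃, b₁, b₂].Pairwise (· ≠ ·))
    (hA : ∀ a ∈ ({a₁, a₂, a₃} : Set ℕ), ∀ δ > 0, ∃ x, dist x A < δ ∧ c x = a)
    (hB : ∀ b ∈ ({b₁, b₂} : Set ℕ), ∀ δ > 0, ∃ x, dist x B < δ ∧ c x = b) :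
    c C ∉ ({a₁, a₂, a₃, b₁, b₂} : Set ℕ) := by
  have key : ∀ (P : EuclideanSpace ℝ (Fin 2)), dist P C = 1 →
      ∀ k, (∀ δ > 0, ∃ x, dist x P < δ ∧ c x = k) → c C ≠ k := by
    intro P hP k hk hCk
    obtain ⟨x, hx, hcx⟩ := hk ε hε
    have h1 : dist x C ≤ dist x P + dist P C := dist_triangle x P C
    have h2 : dist P C ≤ dist P x + dist x C := dist_triangle P x C
    rw [dist_comm P x] at h2
    have hmem : dist x C ∈ Set.Icc (1 - ε) (1 + ε) := by
      constructor <;> [linarith [hP ▸ h2]; linarith [hP ▸ h1]]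
    exact hproper x C hmem (by rw [hcx, hCk])
  intro hC
  simp only [Set.mem_insert_iff, Set.mem_singleton_iff] at hC
  rcases hC with h | h | h | h | h
  · exact key A hAC a₁ (hA a₁ (by simp)) h
  · exact key A hAC a₂ (hA a₂ (by simp)) h
  · exact key A hAC a₃ (hA a₃ (by simp)) h
  · exact key B hBC b₁ (hB b₁ (by simp)) h
  · exact key B hBC b₂ (hB b₂ (by simp)) h
end

section
/- There is no proper 3-coloring of C18(3,4) in which vertex 1 is assigned the two colors {1,2} (i.e., its color set is disjoint from the colors of all its neighbors); that is, no such set-coloring exists. -/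
/-- There is no proper set-coloring of C18(3,4) assigning vertex 1 the two
colors {1, 2} and every other vertex a single color from {1, 2, 3}
(properness: adjacent vertices get disjoint color sets). -/
theorem stmt_18 :
    ¬ ∃ S : ZMod 18 → Finset (Fin 3),
      S 1 = {0, 1} ∧ (∀ v : ZMod 18, v ≠ 1 → (S v).card = 1) ∧
      (∀ i j : ZMod 18, C18.Adj i j → Disjoint (S i) (S j)) := by
  rintro ⟨S, h1, hcard, hadj⟩
  have hs : ∀ v : ZMod 18, v ≠ 1 → ∃ a, S v = {a} :=
    fun v h => Finset.card_eq_one.mp (hcard v h)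
  have key : ∀ i j : ZMod 18, (i - j = 3 ∨ i - j = 4) → i ≠ j → Disjoint (S i) (S j) :=
    fun i j h hne => hadj i j ⟨hne, Or.inl h⟩
  obtain ⟨a0, e0⟩ := hs 0 (by decide)
  obtain ⟨a3, e3⟩ := hs 3 (by decide)
  obtain ⟨a4, e4⟩ := hs 4 (by decide)
  obtain ⟨a5, e5⟩ := hs 5 (by decide)
  obtain ⟨a7, e7⟩ := hs 7 (by decide)
  obtain ⟨a8, e8⟩ := hs 8 (by decide)
  obtain ⟨a9, e9⟩ := hs 9 (by decide)
  obtain ⟨a10, e10⟩ := hs 10 (by decide)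
  obtain ⟨a11, e11⟩ := hs 11 (by decide)
  obtain ⟨a12, e12⟩ := hs 12 (by decide)
  obtain ⟨a13, e13⟩ := hs 13 (by decide)
  obtain ⟨a14, e14⟩ := hs 14 (by decide)
  obtain ⟨a15, e15⟩ := hs 15 (by decide)
  obtain ⟨a16, e16⟩ := hs 16 (by decide)
  obtain ⟨a17, e17⟩ := hs 17 (by decide)
  have n4 : a4 ≠ 0 ∧ a4 ≠ 1 := by
    have h := key 4 1 (by decide) (by decide)
    rw [e4, h1] at h
    simp [Finset.disjoint_left] at h; exact h
  have n5 : a5 ≠ 0 ∧ a5 ≠ 1 := by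
    have h := key 5 1 (by decide) (by decide)
    rw [e5, h1] at h
    simp [Finset.disjoint_left] at h; exact h
  have n15 : a15 ≠ 0 ∧ a15 ≠ 1 := by
    have h := key 1 15 (by decide) (by decide)
    rw [e15, h1] at h
    simp [Finset.disjoint_right] at h; exact h
  have n16 : a16 ≠ 0 ∧ a16 ≠ 1 := by
    have h := key 1 16 (by decide) (by decide)
    rw [e16, h1] at h
    simp [Finset.disjoint_right] at h; exact h
  have d1 : a7 ≠ a4 := by
    have h := key 7 4 (by decide) (by decide)
    rw [e7, e4] at h
    exact Finset.disjoint_singleton.mp h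
  have d2 : a8 ≠ a4 := by
    have h := key 8 4 (by decide) (by decide)
    rw [e8, e4] at h
    exact Finset.disjoint_singleton.mp h
  have d3 : a9 ≠ a5 := by
    have h := key 9 5 (by decide) (by decide)
    rw [e9, e5] at h
    exact Finset.disjoint_singleton.mp h
  have d4 : a15 ≠ a11 := by
    have h := key 15 11 (by decide) (by decide)
    rw [e15, e11] at h
    exact Finset.disjoint_singleton.mp h
  have d5 : a15 ≠ a12 := by
    have h := key 15 12 (by decide) (by decide)
    rw [e15, e12] at h
    exact Finset.disjoint_singleton.mp h
  have d6 : a16 ≠ a13 := by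
    have h := key 16 13 (by decide) (by decide)
    rw [e16, e13] at h
    exact Finset.disjoint_singleton.mp h
  have d7 : a11 ≠ a7 := by
    have h := key 11 7 (by decide) (by decide)
    rw [e11, e7] at h
    exact Finset.disjoint_singleton.mp h
  have d8 : a11 ≠ a8 := by
    have h := key 11 8 (by decide) (by decide)
    rw [e11, e8] at h
    exact Finset.disjoint_singleton.mp h
  have d9 : a12 ≠ a8 := by
    have h := key 12 8 (by decide) (by decide)
    rw [e12, e8] at h
    exact Finset.disjoint_singleton.mp h
  have d10 : a12 ≠ a9 := by
    have h := key 12 9 (by decide) (by decide)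
    rw [e12, e9] at h
    exact Finset.disjoint_singleton.mp h
  have d11 : a13 ≠ a9 := by
    have h := key 13 9 (by decide) (by decide)
    rw [e13, e9] at h
    exact Finset.disjoint_singleton.mp h
  have d12 : a10 ≠ a7 := by
    have h := key 10 7 (by decide) (by decide)
    rw [e10, e7] at h
    exact Finset.disjoint_singleton.mp h
  have d13 : a13 ≠ a10 := by
    have h := key 13 10 (by decide) (by decide)
    rw [e13, e10] at h
    exact Finset.disjoint_singleton.mp h
  have d14 : a14 ≠ a10 := by
    have h := key 14 10 (by decide) (by decide)
    rw [e14, e10] at h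
    exact Finset.disjoint_singleton.mp h
  have d15 : a14 ≠ a11 := by
    have h := key 14 11 (by decide) (by decide)
    rw [e14, e11] at h
    exact Finset.disjoint_singleton.mp h
  have d16 : a0 ≠ a14 := by
    have h := key 0 14 (by decide) (by decide)
    rw [e0, e14] at h
    exact Finset.disjoint_singleton.mp h
  have d17 : a3 ≠ a0 := by
    have h := key 3 0 (by decide) (by decide)
    rw [e3, e0] at h
    exact Finset.disjoint_singleton.mp h
  have d18 : a7 ≠ a3 := by
    have h := key 7 3 (by decide) (by decide)
    rw [e7, e3] at h
    exact Finset.disjoint_singleton.mp h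
  have d19 : a17 ≠ a13 := by
    have h := key 17 13 (by decide) (by decide)
    rw [e17, e13] at h
    exact Finset.disjoint_singleton.mp h
  have d20 : a17 ≠ a14 := by
    have h := key 17 14 (by decide) (by decide)
    rw [e17, e14] at h
    exact Finset.disjoint_singleton.mp h
  have d21 : a3 ≠ a17 := by
    have h := key 3 17 (by decide) (by decide)
    rw [e3, e17] at h
    exact Finset.disjoint_singleton.mp h
  have d22 : a0 ≠ a15 := by
    have h := key 0 15 (by decide) (by decide)
    rw [e0, e15] at h
    exact Finset.disjoint_singleton.mp h
  obtain ⟨n4a, n4b⟩ := n4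
  obtain ⟨n5a, n5b⟩ := n5
  obtain ⟨n15a, n15b⟩ := n15
  obtain ⟨n16a, n16b⟩ := n16
  omega
end
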